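/- (Mohar's growth bound) Let n ≥ 2 and let H be a subgroup of the free group F_n such that i(Γ_H) < 1. Then growth(Γ_H) ≥ (1 + i(Γ_H))/(1 − i(Γ_H)); equivalently, i(Γ_H) ≤ (growth(Γ_H) − 1)/(growth(Γ_H) + 1). -/

import Mathlib

open Filter Real

noncomputable section

namespace JM

/-- The free group of rank `n`. -/
abbrev F (n : ℕ) := FreeGroup (Fin n)

/-- The Poincaré exponent of a subgroup `G` of the free group, with respect to the
word metric of the standard free generating set. -/
def poincareExponent (n : ℕ) (G : Subgroup (F n)) : ℝ :=
  limsup (fun R : ℕ =>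
    Real.log (Nat.card {g : F n // g ∈ G ∧ FreeGroup.norm g ≤ R}) / R) atTop

/-- `G` is of divergence type if its Poincaré series diverges at the exponent. -/
def DivergenceType (n : ℕ) (G : Subgroup (F n)) : Prop :=
  ¬ Summable (fun g : G => Real.exp (-(poincareExponent n G) * FreeGroup.norm (g : F n)))

/-- The vertex set of the quotient graph `Γ_H = T_n/H`: the right cosets `Hg`. -/
abbrev Cosets (n : ℕ) (H : Subgroup (F n)) := Quotient (QuotientGroup.rightRel H)

/-- Right multiplication on right cosets: `Hg ↦ Hga`. -/
def rmul {n : ℕ} {H : Subgroup (F n)} (x : Cosets n H) (a : F n) : Cosets n H :=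
  Quotient.liftOn x (fun g => Quotient.mk (QuotientGroup.rightRel H) (g * a))
    (fun b c h => Quotient.sound (by
      have h' := QuotientGroup.rightRel_apply.mp h
      show (QuotientGroup.rightRel H) _ _
      rw [QuotientGroup.rightRel_apply]
      simpa [mul_assoc] using h'))

/-- Distance from the base vertex `H` to the vertex `Hg` in the quotient graph,
namely `min_{h ∈ H} |hg|`. -/
def cosetDist {n : ℕ} {H : Subgroup (F n)} (x : Cosets n H) : ℕ :=
  sInf (FreeGroup.norm '' {g : F n | Quotient.mk (QuotientGroup.rightRel H) g = x})

/-- The exponential growth rate of the quotient graph `Γ_H = T_n/H`. -/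
def graphGrowth (n : ℕ) (H : Subgroup (F n)) : ℝ :=
  limsup (fun R : ℕ =>
    (Nat.card {x : Cosets n H // cosetDist x ≤ R} : ℝ) ^ (1 / (R : ℝ))) atTop

/-- the generators `S ∪ S⁻¹`, indexed by `Fin n × Bool`. -/
def sgen {n : ℕ} (p : Fin n × Bool) : F n :=
  if p.2 then FreeGroup.of p.1 else (FreeGroup.of p.1)⁻¹

/-- The number of boundary edges of a finite set `A` of vertices of `Γ_H`. -/
def boundaryCard {n : ℕ} {H : Subgroup (F n)} (A : Finset (Cosets n H)) : ℕ :=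
  Nat.card {p : Cosets n H × (Fin n × Bool) // p.1 ∈ A ∧ rmul p.1 (sgen p.2) ∉ A}

/-- The isoperimetric constant of the `2n`-regular graph `Γ_H`. -/
def isoConst (n : ℕ) (H : Subgroup (F n)) : ℝ :=
  sInf {r : ℝ | ∃ A : Finset (Cosets n H), A.Nonempty ∧
    r = (boundaryCard A : ℝ) / (2 * n * A.card)}

/-- The bottom of the spectrum of the discrete Laplacian on `Γ_H`, as the infimum of
Rayleigh quotients of finitely supported nonzero functions. -/
def lambdaZero (n : ℕ) (H : Subgroup (F n)) : ℝ :=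
  sInf {r : ℝ | ∃ f : Cosets n H → ℝ, (Function.support f).Finite ∧ f ≠ 0 ∧
    r = (∑ᶠ x, ∑ i : Fin n, (f x - f (rmul x (FreeGroup.of i))) ^ 2) /
        (2 * n * ∑ᶠ x, (f x) ^ 2)}

/-- The transition operator of the simple random walk on `Γ_H`. -/
def transOp {n : ℕ} {H : Subgroup (F n)} (f : Cosets n H → ℝ) (x : Cosets n H) : ℝ :=
  (1 / (2 * n)) * ∑ p : Fin n × Bool, f (rmul x (sgen p))

/-- The spectral radius of the transition operator `P` of the simple random walk on
`Γ_N`: since `P` is bounded and self-adjoint on `ℓ²`, its spectral radius equals its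
operator norm, i.e. the supremum of `‖Pf‖/‖f‖` over finitely supported nonzero `f`. -/
def specRad (n : ℕ) (H : Subgroup (F n)) : ℝ :=
  sSup {r : ℝ | ∃ f : Cosets n H → ℝ, (Function.support f).Finite ∧ f ≠ 0 ∧
    r = Real.sqrt (∑ᶠ x, (transOp f x) ^ 2) / Real.sqrt (∑ᶠ x, (f x) ^ 2)}

end JM

/-! Every edge leaving the ball `B_R` ends on the sphere `B_{R+1} \ B_R`, and every edge leaving
`B_{R+1}` starts there; reversing the former, the two kinds are distinct (vertex, generator) pairs
at the sphere, so `|∂B_R| + |∂B_{R+1}| ≤ 2n |B_{R+1} \ B_R|`. Bounding both boundaries from below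
by the isoperimetric constant `i` gives `|B_{R+1}| ≥ (1 + i)/(1 - i) · |B_R|`, hence
`|B_R| ≥ ((1 + i)/(1 - i))^R`, while trivially `|B_R| ≤ (2n + 1)^R`. -/

lemma le_limsup_rpow_one_div_of_pow_le {a : ℕ → ℝ} {q C : ℝ} (hq : 0 ≤ q)
    (hlow : ∀ R, q ^ R ≤ a R) (hup : ∀ R, a R ≤ C ^ R) :
    q ≤ limsup (fun R : ℕ => a R ^ (1 / (R : ℝ))) atTop := by
  have ha : ∀ R, 0 ≤ a R := fun R => (pow_nonneg hq R).trans (hlow R)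
  have hC : 0 ≤ C := by simpa using (ha 1).trans (hup 1)
  refine le_limsup_of_frequently_le (Eventually.frequently ?_)
    (isBoundedUnder_of_eventually_le (a := C) ?_)
  · filter_upwards [eventually_ne_atTop 0] with R hR
    rw [← Real.pow_rpow_inv_natCast hq hR, ← one_div]
    exact Real.rpow_le_rpow (pow_nonneg hq R) (hlow R) (by positivity)
  · filter_upwards [eventually_ne_atTop 0] with R hR
    rw [← Real.pow_rpow_inv_natCast hC hR, ← one_div]
    exact Real.rpow_le_rpow (ha R) (hup R) (by positivity)

namespace FreeGroup

variable {α : Type*} [DecidableEq α]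

lemma injective_getElem?_toWord_of_norm_le (R : ℕ) :
    Function.Injective fun g : {g : FreeGroup α // g.norm ≤ R} =>
      fun i : Fin R => g.1.toWord[(i : ℕ)]? := by
  rintro ⟨g, hg⟩ ⟨h, hh⟩ hgh
  refine Subtype.ext (toWord_injective (List.ext_getElem? fun k => ?_))
  by_cases hk : k < R
  · exact congrFun hgh ⟨k, hk⟩
  · dsimp only
    rw [List.getElem?_eq_none (by unfold norm at hg; omega),
      List.getElem?_eq_none (by unfold norm at hh; omega)]

instance finite_norm_le (R : ℕ) [Finite α] : Finite {g : FreeGroup α // g.norm ≤ R} :=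
  Finite.of_injective _ (injective_getElem?_toWord_of_norm_le R)

lemma card_norm_le_le [Fintype α] (R : ℕ) :
    Nat.card {g : FreeGroup α // g.norm ≤ R} ≤ (2 * Fintype.card α + 1) ^ R := by
  refine (Nat.card_le_card_of_injective _ (injective_getElem?_toWord_of_norm_le R)).trans ?_
  simp [Nat.card_eq_fintype_card, mul_comm]

end FreeGroup

namespace JM

section CosetGraph

variable {n : ℕ} {H : Subgroup (F n)}

lemma rmul_mk (g a : F n) :
    rmul (Quotient.mk (QuotientGroup.rightRel H) g) a =
      Quotient.mk (QuotientGroup.rightRel H) (g * a) :=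
  rfl

lemma rmul_rmul (x : Cosets n H) (a b : F n) : rmul (rmul x a) b = rmul x (a * b) := by
  induction x using Quotient.inductionOn
  simp only [rmul_mk, mul_assoc]

lemma rmul_one (x : Cosets n H) : rmul x 1 = x := by
  induction x using Quotient.inductionOn
  simp only [rmul_mk, mul_one]

lemma sgen_not (p : Fin n × Bool) : sgen (p.1, !p.2) = (sgen p)⁻¹ := by
  obtain ⟨i, _ | _⟩ := p <;> simp [sgen]

/-- The edge `(x, s)` runs from `x` to `x s`; `revEdge` traverses it backwards. -/
def revEdge (e : Cosets n H × (Fin n × Bool)) : Cosets n H × (Fin n × Bool) :=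
  (rmul e.1 (sgen e.2), (e.2.1, !e.2.2))

lemma revEdge_involutive : Function.Involutive (revEdge (H := H)) := by
  rintro ⟨x, p⟩
  simp only [revEdge, Bool.not_not, rmul_rmul, sgen_not, mul_inv_cancel, rmul_one]

open scoped Classical in
def boundaryEdges (A : Finset (Cosets n H)) : Finset (Cosets n H × (Fin n × Bool)) :=
  {e ∈ A ×ˢ Finset.univ | (revEdge e).1 ∉ A}

lemma mem_boundaryEdges {A : Finset (Cosets n H)} {e : Cosets n H × (Fin n × Bool)} :
    e ∈ boundaryEdges A ↔ e.1 ∈ A ∧ (revEdge e).1 ∉ A := by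
  classical
  rw [boundaryEdges, Finset.mem_filter, Finset.mem_product]
  simp only [Finset.mem_univ, and_true]

lemma boundaryCard_eq_card_boundaryEdges (A : Finset (Cosets n H)) :
    boundaryCard A = (boundaryEdges A).card := by
  rw [boundaryCard, ← Nat.card_eq_finsetCard]
  exact Nat.card_congr (Equiv.subtypeEquivRight fun e => mem_boundaryEdges.symm)

lemma boundaryCard_add_boundaryCard_le {A A' : Finset (Cosets n H)} (hAA' : A ⊆ A')
    (hnbr : ∀ x ∈ A, ∀ p, rmul x (sgen p) ∈ A') :
    boundaryCard A + boundaryCard A' + 2 * n * A.card ≤ 2 * n * A'.card := by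
  classical
  rw [boundaryCard_eq_card_boundaryEdges, boundaryCard_eq_card_boundaryEdges,
    ← Finset.card_sdiff_add_card_eq_card hAA', mul_add, add_le_add_iff_right]
  have hin : (boundaryEdges A).image revEdge ⊆ (A' \ A) ×ˢ Finset.univ := by
    simp only [Finset.subset_iff, Finset.mem_image, mem_boundaryEdges]
    rintro _ ⟨⟨x, p⟩, ⟨hx, hxp⟩, rfl⟩
    exact Finset.mem_product.mpr ⟨Finset.mem_sdiff.mpr ⟨hnbr x hx p, hxp⟩, Finset.mem_univ _⟩
  have hout : boundaryEdges A' ⊆ (A' \ A) ×ˢ Finset.univ := by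
    simp only [Finset.subset_iff, mem_boundaryEdges]
    rintro ⟨x, p⟩ ⟨hx, hxp⟩
    simpa [hx] using fun hxA => hxp (hnbr x hxA p)
  have hdisj : Disjoint ((boundaryEdges A).image revEdge) (boundaryEdges A') := by
    simp only [Finset.disjoint_left, Finset.mem_image, mem_boundaryEdges]
    rintro _ ⟨e, ⟨he, -⟩, rfl⟩ ⟨-, hback⟩
    rw [revEdge_involutive] at hback
    exact hback (hAA' he)
  calc (boundaryEdges A).card + (boundaryEdges A').card
      = ((boundaryEdges A).image revEdge ∪ boundaryEdges A').card := by
        rw [Finset.card_union_of_disjoint hdisj,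
          Finset.card_image_of_injective _ revEdge_involutive.injective]
    _ ≤ ((A' \ A) ×ˢ Finset.univ).card := Finset.card_le_card (Finset.union_subset hin hout)
    _ = 2 * n * (A' \ A).card := by simp [mul_comm]

end CosetGraph

section Isoperimetry

variable {n : ℕ} {H : Subgroup (F n)}

lemma isoConst_nonneg : 0 ≤ isoConst n H :=
  Real.sInf_nonneg (by rintro _ ⟨A, -, rfl⟩; positivity)

lemma isoConst_le {A : Finset (Cosets n H)} (hA : A.Nonempty) :
    isoConst n H ≤ boundaryCard A / (2 * n * A.card) :=
  csInf_le ⟨0, by rintro _ ⟨A, -, rfl⟩; positivity⟩ ⟨A, hA, rfl⟩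

lemma mul_card_le_card_of_forall_rmul_mem (hn : 0 < n) (hi : isoConst n H < 1)
    {A A' : Finset (Cosets n H)} (hA : A.Nonempty) (hAA' : A ⊆ A')
    (hnbr : ∀ x ∈ A, ∀ p, rmul x (sgen p) ∈ A') :
    (1 + isoConst n H) / (1 - isoConst n H) * A.card ≤ A'.card := by
  set i := isoConst n H
  have hpos : ∀ {B : Finset (Cosets n H)}, B.Nonempty → (0 : ℝ) < 2 * n * B.card :=
    fun hB => by have := hB.card_pos; positivity
  have hbA := (le_div_iff₀ (hpos hA)).mp (isoConst_le hA)
  have hbA' := (le_div_iff₀ (hpos (hA.mono hAA'))).mp (isoConst_le (hA.mono hAA'))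
  have hcount : (boundaryCard A + boundaryCard A' + 2 * n * A.card : ℝ) ≤ 2 * n * A'.card := by
    exact_mod_cast boundaryCard_add_boundaryCard_le hAA' hnbr
  have hiso : i * (A.card + A'.card) ≤ A'.card - A.card := by
    refine le_of_mul_le_mul_left ?_ (by positivity : (0 : ℝ) < 2 * n)
    linarith
  rw [div_mul_eq_mul_div, div_le_iff₀ (by linarith)]
  linarith

end Isoperimetry

section Balls

variable {n : ℕ} {H : Subgroup (F n)}

lemma cosetDist_mk_le (g : F n) :
    cosetDist (Quotient.mk (QuotientGroup.rightRel H) g) ≤ g.norm :=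
  Nat.sInf_le ⟨g, rfl, rfl⟩

lemma exists_mk_eq_and_norm_eq_cosetDist (x : Cosets n H) :
    ∃ g : F n, Quotient.mk (QuotientGroup.rightRel H) g = x ∧ g.norm = cosetDist x :=
  have ⟨g, hg⟩ := x.exists_rep
  Nat.sInf_mem (s := FreeGroup.norm '' {g | Quotient.mk _ g = x}) ⟨_, g, hg, rfl⟩

lemma cosetDist_rmul_le (x : Cosets n H) (a : F n) :
    cosetDist (rmul x a) ≤ cosetDist x + a.norm := by
  obtain ⟨g, rfl, hg⟩ := exists_mk_eq_and_norm_eq_cosetDist x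
  rw [rmul_mk, ← hg]
  exact (cosetDist_mk_le _).trans (FreeGroup.norm_mul_le g a)

lemma surjective_mk_of_norm_le (R : ℕ) :
    Function.Surjective fun g : {g : F n // g.norm ≤ R} =>
      (⟨Quotient.mk _ g.1, (cosetDist_mk_le g.1).trans g.2⟩ :
        {x : Cosets n H // cosetDist x ≤ R}) := by
  rintro ⟨x, hx⟩
  obtain ⟨g, rfl, hg⟩ := exists_mk_eq_and_norm_eq_cosetDist x
  exact ⟨⟨g, hg ▸ hx⟩, rfl⟩

instance finite_cosetDist_le (R : ℕ) : Finite {x : Cosets n H // cosetDist x ≤ R} :=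
  Finite.of_surjective _ (surjective_mk_of_norm_le R)

lemma card_cosetDist_le_le (R : ℕ) :
    Nat.card {x : Cosets n H // cosetDist x ≤ R} ≤ (2 * n + 1) ^ R := by
  simpa using (Nat.card_le_card_of_surjective _ (surjective_mk_of_norm_le (H := H) R)).trans
    (FreeGroup.card_norm_le_le R)

variable (H) in
def ball (R : ℕ) : Finset (Cosets n H) :=
  (Set.finite_coe_iff.mp (finite_cosetDist_le (H := H) R)).toFinset

lemma mem_ball {R : ℕ} {x : Cosets n H} : x ∈ ball H R ↔ cosetDist x ≤ R :=
  Set.Finite.mem_toFinset _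

lemma card_ball (R : ℕ) : (ball H R).card = Nat.card {x : Cosets n H // cosetDist x ≤ R} :=
  (Nat.card_eq_card_finite_toFinset _).symm

lemma ball_nonempty (R : ℕ) : (ball H R).Nonempty :=
  ⟨Quotient.mk _ 1, mem_ball.mpr ((cosetDist_mk_le 1).trans (by simp))⟩

lemma ball_subset_ball_succ (R : ℕ) : ball H R ⊆ ball H (R + 1) :=
  fun _ hx => mem_ball.mpr ((mem_ball.mp hx).trans R.le_succ)

lemma norm_sgen (p : Fin n × Bool) : (sgen p).norm = 1 := by
  obtain ⟨i, _ | _⟩ := p <;> simp [sgen]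

lemma rmul_sgen_mem_ball_succ {R : ℕ} {x : Cosets n H} (hx : x ∈ ball H R)
    (p : Fin n × Bool) : rmul x (sgen p) ∈ ball H (R + 1) := by
  have := cosetDist_rmul_le x (sgen p)
  rw [norm_sgen] at this
  exact mem_ball.mpr (this.trans (Nat.add_le_add_right (mem_ball.mp hx) 1))

lemma pow_le_card_ball (hn : 0 < n) (hi : isoConst n H < 1) (R : ℕ) :
    ((1 + isoConst n H) / (1 - isoConst n H)) ^ R ≤ (ball H R).card := by
  set q := (1 + isoConst n H) / (1 - isoConst n H)
  have hq : 0 ≤ q := div_nonneg (by linarith [isoConst_nonneg (H := H)]) (by linarith)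
  induction R with
  | zero => simpa using (ball_nonempty (H := H) 0).card_pos
  | succ R ih =>
    calc q ^ (R + 1) = q * q ^ R := pow_succ' q R
      _ ≤ q * (ball H R).card := mul_le_mul_of_nonneg_left ih hq
      _ ≤ (ball H (R + 1)).card :=
        mul_card_le_card_of_forall_rmul_mem hn hi (ball_nonempty R) (ball_subset_ball_succ R)
          fun _ hx => rmul_sgen_mem_ball_succ hx

end Balls

/-- Mohar's growth bound: For a subgroup `H ≤ F_n` (`n ≥ 2`) with
`i(Γ_H) < 1`, one has `growth(Γ_H) ≥ (1 + i(Γ_H))/(1 − i(Γ_H))`; equivalently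
`i(Γ_H) ≤ (growth(Γ_H) − 1)/(growth(Γ_H) + 1)`. -/
theorem stmt8 (n : ℕ) (hn : 2 ≤ n) (H : Subgroup (F n)) (hi : isoConst n H < 1) :
    graphGrowth n H ≥ (1 + isoConst n H) / (1 - isoConst n H) ∧
    isoConst n H ≤ (graphGrowth n H - 1) / (graphGrowth n H + 1) := by
  have hi₀ : 0 ≤ isoConst n H := isoConst_nonneg
  have hgrowth : (1 + isoConst n H) / (1 - isoConst n H) ≤ graphGrowth n H := by
    refine le_limsup_rpow_one_div_of_pow_le (C := 2 * n + 1)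
      (div_nonneg (by linarith) (by linarith)) (fun R => ?_)
      (fun R => by exact_mod_cast card_cosetDist_le_le R)
    rw [← card_ball]
    exact pow_le_card_ball (by omega) hi R
  refine ⟨hgrowth, ?_⟩
  rw [div_le_iff₀ (by linarith)] at hgrowth
  rw [le_div_iff₀ (by nlinarith)]
  linarith

end JM
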